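/- arXiv:2605.23806 — 3 statements merged into one kernel-verified Lean document; each statement's English description precedes it below -/
import Mathlib

section
/- Let G be a group and (V_n)_{n∈ℤ} an increasing chain of symmetric subsets containing the identity with G = ⋃_n V_n and V_n·V_n·V_n ⊆ V_{n+1} for all n ∈ ℤ. Define L(g) = inf{2^n : g ∈ V_n} and ℓ(g) = inf{∑_{i=1}^k L(h_i) : g = h_1⋯h_k}. Then (1/2)·L(g) ≤ ℓ(g) ≤ L(g) for all g ∈ G. -/
open Pointwise

private lemma birkhoff_key {G : Type*} [Group G] (V : ℤ → Set G)
    (hone : ∀ n, (1 : G) ∈ V n) (hmono : Monotone V)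
    (hcube : ∀ n, V n * V n * V n ⊆ V (n + 1)) :
    ∀ k : ℕ, ∀ l : List (G × ℤ), l.length = k → (∀ p ∈ l, p.1 ∈ V p.2) →
      ∀ n : ℤ, (l.map (fun p => (2 : ℝ) ^ p.2)).sum < 2 ^ n →
      (l.map Prod.fst).prod ∈ V n := by
  intro k
  induction k using Nat.strong_induction_on with
  | _ k IH =>
    intro l hlen hmem n hsum
    classical
    rcases eq_or_ne l [] with rfl | hne
    · simpa using hone n
    have hk : 0 < k := hlen ▸ List.length_pos_iff.mpr hne
    have hnn : ∀ m : List (G × ℤ), 0 ≤ (m.map (fun p => (2 : ℝ) ^ p.2)).sum := by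
      intro m
      refine List.sum_nonneg ?_
      intro x hx
      rcases List.mem_map.mp hx with ⟨p, -, rfl⟩
      positivity
    set F : G × ℤ → ℝ := fun p => (2 : ℝ) ^ p.2 with hF
    set P : ℕ → Prop := fun j => ((l.take j).map F).sum < 2 ^ (n - 1) with hP
    have hP0 : P 0 := by simp only [hP, List.take_zero, List.map_nil, List.sum_nil]; positivity
    set j := Nat.findGreatest P (k - 1) with hjdef
    have hPj : P j := Nat.findGreatest_spec (Nat.zero_le _) hP0
    have hjle : j ≤ k - 1 := Nat.findGreatest_le _
    have hjlt : j < l.length := by omega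
    have hdec : l = l.take j ++ l[j] :: l.drop (j + 1) := by
      conv_lhs => rw [← List.take_append_drop j l, List.drop_eq_getElem_cons hjlt]
    have hsum3 : ((l.take j).map F).sum + F l[j] + ((l.drop (j + 1)).map F).sum
        = (l.map F).sum := by
      conv_rhs => rw [hdec]
      rw [List.map_append, List.sum_append, List.map_cons, List.sum_cons]
      ring
    have hsplit : (l.map F).sum = ((l.take (j + 1)).map F).sum
        + ((l.drop (j + 1)).map F).sum := by
      conv_lhs => rw [← List.take_append_drop (j + 1) l]
      rw [List.map_append, List.sum_append]
    have h2n : (2 : ℝ) ^ (n - 1) * 2 = 2 ^ n := by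
      rw [← zpow_add_one₀ (by norm_num : (2 : ℝ) ≠ 0), sub_add_cancel]
    have hsuf : ((l.drop (j + 1)).map F).sum < 2 ^ (n - 1) := by
      rcases eq_or_lt_of_le hjle with heq | hlt'
      · have hd : l.drop (j + 1) = [] := List.drop_eq_nil_of_le (by omega)
        rw [hd]
        simpa using (by positivity : (0 : ℝ) < 2 ^ (n - 1))
      · have hnP : ¬ P (j + 1) := Nat.findGreatest_is_greatest (n := k - 1) (by omega) (by omega)
        have h1 : (2 : ℝ) ^ (n - 1) ≤ ((l.take (j + 1)).map F).sum := not_lt.mp hnP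
        linarith
    have hmid : F l[j] < 2 ^ n := by
      have h0a := hnn (l.take j)
      have h0b := hnn (l.drop (j + 1))
      linarith
    have hmidlt : l[j].2 < n := (zpow_lt_zpow_iff_right₀ (by norm_num : (1:ℝ) < 2)).mp hmid
    have hmidmem : l[j].1 ∈ V (n - 1) :=
      hmono (by omega : l[j].2 ≤ n - 1) (hmem _ (l.getElem_mem hjlt))
    have hpre : ((l.take j).map Prod.fst).prod ∈ V (n - 1) :=
      IH (l.take j).length (by simp; omega) _ rfl
        (fun p hp => hmem p (List.mem_of_mem_take hp)) (n - 1) hPj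
    have hsufp : ((l.drop (j + 1)).map Prod.fst).prod ∈ V (n - 1) :=
      IH (l.drop (j + 1)).length (by simp; omega) _ rfl
        (fun p hp => hmem p (List.mem_of_mem_drop hp)) (n - 1) hsuf
    have hprod : (l.map Prod.fst).prod = ((l.take j).map Prod.fst).prod * l[j].1
        * ((l.drop (j + 1)).map Prod.fst).prod := by
      conv_lhs => rw [hdec]
      rw [List.map_append, List.prod_append, List.map_cons, List.prod_cons, mul_assoc]
    rw [hprod]
    have := hcube (n - 1) (Set.mul_mem_mul (Set.mul_mem_mul hpre hmidmem) hsufp)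
    rwa [sub_add_cancel] at this

theorem birkhoff_length_bounds {G : Type*} [Group G] (V : ℤ → Set G)
    (hsym : ∀ n, (V n)⁻¹ = V n) (hone : ∀ n, (1 : G) ∈ V n)
    (hmono : ∀ n, V n ⊆ V (n + 1)) (hcover : (⋃ n, V n) = Set.univ)
    (hcube : ∀ n, V n * V n * V n ⊆ V (n + 1))
    (L ℓ : G → ℝ)
    (hL : ∀ g, L g = sInf {x : ℝ | ∃ n : ℤ, g ∈ V n ∧ x = (2 : ℝ) ^ n})
    (hℓ : ∀ g, ℓ g = sInf {x : ℝ | ∃ l : List G, l ≠ [] ∧ l.prod = g ∧ x = (l.map L).sum}) :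
    ∀ g : G, (1 / 2) * L g ≤ ℓ g ∧ ℓ g ≤ L g := by
  have hmonoM : Monotone V := monotone_int_of_le_succ hmono
  have hLbdd : ∀ g : G, BddBelow {x : ℝ | ∃ n : ℤ, g ∈ V n ∧ x = (2 : ℝ) ^ n} := by
    intro g
    exact ⟨0, by rintro x ⟨n, -, rfl⟩; positivity⟩
  have hLnn : ∀ g : G, 0 ≤ L g := by
    intro g
    rw [hL]
    apply Real.sInf_nonneg
    rintro x ⟨n, -, rfl⟩
    positivity
  have hLne : ∀ g : G, {x : ℝ | ∃ n : ℤ, g ∈ V n ∧ x = (2 : ℝ) ^ n}.Nonempty := by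
    intro g
    have hg : g ∈ ⋃ n, V n := hcover ▸ Set.mem_univ g
    rcases Set.mem_iUnion.mp hg with ⟨n, hn⟩
    exact ⟨2 ^ n, n, hn, rfl⟩
  have hLle : ∀ (g : G) (n : ℤ), g ∈ V n → L g ≤ 2 ^ n := by
    intro g n hg
    rw [hL]
    exact csInf_le (hLbdd g) ⟨n, hg, rfl⟩
  intro g
  constructor
  · -- lower bound
    rw [hℓ]
    refine le_csInf ⟨(([g]).map L).sum, [g], by simp, by simp, rfl⟩ ?_
    rintro x ⟨l, hlne, rfl, rfl⟩
    refine le_of_forall_pos_le_add ?_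
    intro ε hε
    have hlpos : 0 < (l.length : ℝ) := by
      have := List.length_pos_iff.mpr hlne
      exact_mod_cast this
    set δ := ε / l.length with hδdef
    have hδ : 0 < δ := by positivity
    have hex : ∀ h : G, ∃ m : ℤ, h ∈ V m ∧ (2 : ℝ) ^ m < L h + δ := by
      intro h
      have hlt : sInf {x : ℝ | ∃ n : ℤ, h ∈ V n ∧ x = (2 : ℝ) ^ n} < L h + δ := by
        rw [← hL]; linarith
      obtain ⟨x, ⟨m, hm, rfl⟩, hxlt⟩ := exists_lt_of_csInf_lt (hLne h) hlt
      exact ⟨m, hm, hxlt⟩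
    choose f hf1 hf2 using hex
    set l' : List (G × ℤ) := l.map (fun h => (h, f h)) with hl'
    set S : ℝ := (l'.map (fun p => (2 : ℝ) ^ p.2)).sum with hS
    have hmapeq : l'.map (fun p => (2 : ℝ) ^ p.2) = l.map (fun h => (2 : ℝ) ^ f h) := by
      simp [hl', List.map_map, Function.comp]
    have hsum_add : ∀ m : List G, ((m.map fun h => L h + δ)).sum
        = (m.map L).sum + m.length * δ := by
      intro m
      induction m with
      | nil => simp
      | cons a t ih => simp [ih]; ring
    have hS1 : S ≤ (l.map L).sum + ε := by
      rw [hS, hmapeq]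
      have h1 : ((l.map fun h => (2:ℝ) ^ f h)).sum ≤ ((l.map fun h => L h + δ)).sum :=
        List.sum_le_sum fun h _ => le_of_lt (hf2 h)
      rw [hsum_add] at h1
      have : (l.length : ℝ) * δ = ε := by
        rw [hδdef]; field_simp
      linarith
    have hSpos : 0 < S := by
      obtain ⟨a, ha⟩ := List.exists_mem_of_ne_nil l hlne
      have hmem : (2:ℝ) ^ f a ∈ l'.map (fun p => (2 : ℝ) ^ p.2) := by
        rw [hmapeq]
        exact List.mem_map.mpr ⟨a, ha, rfl⟩
      have hle := List.single_le_sum (l := l'.map (fun p => (2 : ℝ) ^ p.2))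
        (by rintro x hx; rcases List.mem_map.mp hx with ⟨p, -, rfl⟩; positivity) _ hmem
      have : (0:ℝ) < 2 ^ f a := by positivity
      rw [hS]; linarith
    obtain ⟨n, hn1, hn2⟩ := exists_mem_Ico_zpow hSpos (by norm_num : (1:ℝ) < 2)
    have hprodmem : (l'.map Prod.fst).prod ∈ V (n + 1) := by
      refine birkhoff_key V hone hmonoM hcube l'.length l' rfl ?_ (n + 1) (by rw [← hS]; exact hn2)
      rintro p hp
      rcases List.mem_map.mp hp with ⟨h, -, rfl⟩
      exact hf1 h
    have hfst : l'.map Prod.fst = l := by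
      simp [hl', List.map_map, Function.comp_def]
    rw [hfst] at hprodmem
    have hLg : L l.prod ≤ 2 ^ (n + 1) := hLle _ _ hprodmem
    have h2 : (2 : ℝ) ^ (n + 1) = 2 * 2 ^ n := by
      rw [zpow_add_one₀ (by norm_num : (2:ℝ) ≠ 0)]; ring
    nlinarith [hn1]
  · -- upper bound
    rw [hℓ]
    refine csInf_le ?_ ⟨[g], by simp, by simp, by simp⟩
    exact ⟨0, by
      rintro x ⟨l, -, -, rfl⟩
      exact List.sum_nonneg (by rintro y hy; rcases List.mem_map.mp hy with ⟨h, -, rfl⟩; exact hLnn h)⟩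
end

section
/- Suppose a topological group G is covered by countably many closed coarsely bounded sets and G is a Baire space. Then G is locally bounded: some identity neighbourhood of G is coarsely bounded. -/
open scoped Pointwise


def IsContLeftInvPseudometric {G : Type*} [Group G] [TopologicalSpace G]
    (d : G → G → ℝ) : Prop :=
  (∀ x, d x x = 0) ∧ (∀ x y, 0 ≤ d x y) ∧ (∀ x y, d x y = d y x) ∧
    (∀ x y z, d x z ≤ d x y + d y z) ∧ (∀ h g f, d (h * g) (h * f) = d g f) ∧
    Continuous (fun p : G × G => d p.1 p.2)

def CoarselyBounded {G : Type*} [Group G] [TopologicalSpace G] (A : Set G) : Prop :=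
  ∀ d : G → G → ℝ, IsContLeftInvPseudometric d → ∃ C : ℝ, ∀ x ∈ A, ∀ y ∈ A, d x y ≤ C

theorem baire_locally_bounded {G : Type*} [Group G] [TopologicalSpace G]
    [IsTopologicalGroup G] [BaireSpace G] (B : ℕ → Set G)
    (hclosed : ∀ n, IsClosed (B n)) (hbdd : ∀ n, CoarselyBounded (B n))
    (hcover : (⋃ n, B n) = Set.univ) :
    ∃ V : Set G, V ∈ nhds (1 : G) ∧ CoarselyBounded V := by
  obtain ⟨n, g, hg⟩ := nonempty_interior_of_iUnion_of_closed hclosed hcover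
  refine ⟨g⁻¹ • (B n), ?_, ?_⟩
  · have h1 : B n ∈ nhds g := mem_interior_iff_mem_nhds.mp hg
    have := smul_mem_nhds_smul g⁻¹ h1
    simpa using this
  · intro d hd
    obtain ⟨C, hC⟩ := hbdd n d hd
    refine ⟨C, ?_⟩
    rintro x ⟨a, ha, rfl⟩ y ⟨b, hb, rfl⟩
    simp only [smul_eq_mul]
    rw [hd.2.2.2.2.1]
    exact hC a ha b hb
end

section
/- Let G be a topological group, A ⊆ G coarsely bounded, and let (V_n) be an increasing sequence of open subsets of G with G = ⋃_n V_n and V_n·V_n ⊆ V_{n+1} for all n. Then A ⊆ V_n for some n. -/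
open Pointwise

open NNReal in
theorem chain_pseudometric {G : Type*} [Group G] [TopologicalSpace G] [IsTopologicalGroup G]
    (W : ℤ → Set G) (hWopen : ∀ n, IsOpen (W n)) (hWone : ∀ n, (1:G) ∈ W n)
    (hWsymm : ∀ n, ∀ g ∈ W n, g⁻¹ ∈ W n) (hWtriple : ∀ n, W n * W n * W n ⊆ W (n+1))
    (hWcov : ∀ g : G, ∃ n : ℤ, g ∈ W n) :
    ∃ d : G → G → ℝ, IsContLeftInvPseudometric d ∧
      (∀ x y : G, ∀ n : ℤ, 2 * d x y ≤ (2:ℝ)^n → x⁻¹ * y ∈ W n) ∧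
      (∀ x y : G, ∀ n : ℤ, x⁻¹ * y ∈ W n → d x y ≤ (2:ℝ)^n) := by
  classical
  have hWmono : Monotone W := monotone_int_of_le_succ fun n => fun x hx => by
    have h : (1:G) * 1 * x ∈ W n * W n * W n :=
      Set.mul_mem_mul (Set.mul_mem_mul (hWone n) (hWone n)) hx
    simpa using hWtriple n h
  set f : G → ℝ≥0 := fun g => ⨅ n : {n : ℤ // g ∈ W n}, (2:ℝ≥0)^(n:ℤ) with hf
  have hne : ∀ g : G, Nonempty {n : ℤ // g ∈ W n} := fun g =>
    (hWcov g).elim fun n h => ⟨⟨n, h⟩⟩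
  have f_le : ∀ {g : G} {n : ℤ}, g ∈ W n → f g ≤ 2^n := fun {g n} h =>
    ciInf_le (OrderBot.bddBelow _) (⟨n, h⟩ : {n : ℤ // g ∈ W n})
  have f_zero : ∀ {x : ℝ≥0}, (∀ n : ℤ, x ≤ 2^n) → x = 0 := by
    intro x hx
    refine le_antisymm ?_ zero_le
    have key : ∀ k : ℕ, x ≤ (2⁻¹ : ℝ≥0)^k := by
      intro k
      have := hx (-(k:ℤ))
      rwa [zpow_neg, ← inv_zpow, zpow_natCast] at this
    have htendsto : Filter.Tendsto (fun k : ℕ => ((2:ℝ≥0)⁻¹)^k) Filter.atTop (nhds 0) :=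
      tendsto_pow_atTop_nhds_zero_of_lt_one (inv_lt_one_of_one_lt₀ one_lt_two)
    exact ge_of_tendsto htendsto (Filter.Eventually.of_forall key)
  have mem_of_f_le : ∀ {g : G} {n : ℤ}, f g ≤ 2^n → g ∈ W n := by
    intro g n h
    by_contra hg
    have hlow : (2:ℝ≥0)^(n+1) ≤ f g := by
      haveI := hne g
      refine le_ciInf fun m => ?_
      have hmn : n + 1 ≤ (m : ℤ) := by
        by_contra hlt
        push_neg at hlt
        exact hg (hWmono (by omega) m.2)
      exact zpow_le_zpow_right₀ (by norm_num) hmn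
    have hcon : (2:ℝ≥0)^(n+1) ≤ 2^n := hlow.trans h
    exact absurd hcon (not_le.2 (zpow_lt_zpow_right₀ (by norm_num) (by omega)))
  have attain : ∀ g : G, f g ≠ 0 → ∃ n : ℤ, f g = (2:ℝ≥0)^n := by
    intro g hg
    by_cases hall : ∀ n : ℤ, g ∈ W n
    · exact absurd (f_zero fun n => f_le (hall n)) hg
    push_neg at hall
    obtain ⟨n₁, hn₁⟩ := hall
    have hbdd : ∀ z : ℤ, g ∈ W z → n₁ + 1 ≤ z := by
      intro z hz
      by_contra hlt
      push_neg at hlt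
      exact hn₁ (hWmono (by omega) hz)
    obtain ⟨lb, hlb, hleast⟩ := Int.exists_least_of_bdd ⟨n₁ + 1, hbdd⟩ (hWcov g)
    refine ⟨lb, le_antisymm (f_le hlb) ?_⟩
    haveI := hne g
    exact le_ciInf fun m => zpow_le_zpow_right₀ (by norm_num) (hleast _ m.2)
  -- the pre-distance
  set d₀ : G → G → ℝ≥0 := fun x y => f (x⁻¹ * y) with hd₀
  have hs : ∀ x : G, d₀ x x = 0 := fun x => by
    simp only [hd₀, inv_mul_cancel]
    exact f_zero fun n => f_le (hWone n)
  have hc : ∀ x y : G, d₀ x y = d₀ y x := by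
    have key : ∀ g : G, f g⁻¹ ≤ f g := by
      intro g
      haveI := hne g
      exact le_ciInf fun n => f_le (hWsymm _ _ n.2)
    have feq : ∀ g : G, f g⁻¹ = f g := fun g =>
      le_antisymm (key g) (by simpa using key g⁻¹)
    intro x y
    simp only [hd₀]
    rw [← feq (x⁻¹ * y), mul_inv_rev, inv_inv]
  have hquad : ∀ x₁ x₂ x₃ x₄ : G,
      d₀ x₁ x₄ ≤ 2 * max (d₀ x₁ x₂) (max (d₀ x₂ x₃) (d₀ x₃ x₄)) := by
    have quad : ∀ a b c : G, f (a * b * c) ≤ 2 * max (f a) (max (f b) (f c)) := by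
      intro a b c
      set m := max (f a) (max (f b) (f c)) with hm
      have ha : f a ≤ m := le_max_left _ _
      have hb : f b ≤ m := (le_max_left _ _).trans (le_max_right _ _)
      have hcle : f c ≤ m := (le_max_right _ _).trans (le_max_right _ _)
      have key : ∀ n : ℤ, m ≤ 2^n → f (a * b * c) ≤ 2^(n+1) := by
        intro n hn
        exact f_le (hWtriple n (Set.mul_mem_mul (Set.mul_mem_mul
          (mem_of_f_le (ha.trans hn)) (mem_of_f_le (hb.trans hn)))
          (mem_of_f_le (hcle.trans hn))))
      rcases eq_or_ne m 0 with hm0 | hm0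
      · have : f (a * b * c) = 0 := f_zero fun n => by
          have := key (n - 1) (by rw [hm0]; exact zero_le)
          simpa using this
        simp [this]
      · have hex : ∃ n : ℤ, m = 2^n := by
          have hor : m = f a ∨ m = f b ∨ m = f c := by
            rcases max_choice (f a) (max (f b) (f c)) with h' | h'
            · exact Or.inl (hm.trans h')
            · rcases max_choice (f b) (f c) with h | h
              · exact Or.inr (Or.inl ((hm.trans h').trans h))
              · exact Or.inr (Or.inr ((hm.trans h').trans h))
          rcases hor with h | h | h
          · exact h ▸ attain a (fun h0 => hm0 (h.trans h0))
          · exact h ▸ attain b (fun h0 => hm0 (h.trans h0))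
          · exact h ▸ attain c (fun h0 => hm0 (h.trans h0))
        obtain ⟨n, hn⟩ := hex
        calc f (a * b * c) ≤ 2^(n+1) := key n hn.le
          _ = 2 * m := by rw [hn, zpow_add_one₀ two_ne_zero, mul_comm]
    intro x₁ x₂ x₃ x₄
    have harg : x₁⁻¹ * x₄ = (x₁⁻¹ * x₂) * (x₂⁻¹ * x₃) * (x₃⁻¹ * x₄) := by group
    simpa only [hd₀, ← harg] using quad (x₁⁻¹ * x₂) (x₂⁻¹ * x₃) (x₃⁻¹ * x₄)
  set M := PseudoMetricSpace.ofPreNNDist d₀ hs hc with hM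
  set D : G → G → ℝ := @dist G (@PseudoMetricSpace.toDist G M) with hD
  have hDle : ∀ x y : G, D x y ≤ (d₀ x y : ℝ) := fun x y =>
    PseudoMetricSpace.dist_ofPreNNDist_le d₀ hs hc x y
  have hleD : ∀ x y : G, (d₀ x y : ℝ) ≤ 2 * D x y := fun x y =>
    PseudoMetricSpace.le_two_mul_dist_ofPreNNDist d₀ hs hc hquad x y
  have hDself : ∀ x : G, D x x = 0 := M.dist_self
  have hDcomm : ∀ x y : G, D x y = D y x := M.dist_comm
  have hDtri : ∀ x y z : G, D x z ≤ D x y + D y z := M.dist_triangle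
  have hDnonneg : ∀ x y : G, 0 ≤ D x y := by
    intro x y
    have h1 := hDtri x y x
    have h2 := hDcomm y x
    have h0 := hDself x
    linarith
  -- left invariance
  have hDinv : ∀ h g f' : G, D (h * g) (h * f') = D g f' := by
    intro h x y
    have d₀inv : ∀ u v : G, d₀ (h * u) (h * v) = d₀ u v := by
      intro u v
      simp only [hd₀]
      congr 1
      group
    rw [hD, hM, PseudoMetricSpace.dist_ofPreNNDist, PseudoMetricSpace.dist_ofPreNNDist]
    congr 1
    have hsum : ∀ l : List G,
        (((h * x) :: l.map (h * ·)).zipWith d₀ (l.map (h * ·) ++ [h * y])).sum =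
          ((x :: l).zipWith d₀ (l ++ [y])).sum := by
      intro l
      have h1 : ((h * x) :: l.map (h * ·)) = (x :: l).map (h * ·) := by simp
      have h2 : (l.map (h * ·) ++ [h * y]) = (l ++ [y]).map (h * ·) := by simp
      rw [h1, h2, List.zipWith_map]
      simp only [d₀inv]
    apply le_antisymm
    · refine le_ciInf fun l => ?_
      refine le_trans (ciInf_le (OrderBot.bddBelow _) (l.map (h * ·))) ?_
      exact le_of_eq (hsum l)
    · refine le_ciInf fun l => ?_
      refine le_trans (ciInf_le (OrderBot.bddBelow _) (l.map (h⁻¹ * ·))) ?_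
      refine le_of_eq ?_
      have h3 : (l.map (h⁻¹ * ·)).map (h * ·) = l := by
        rw [List.map_map]
        simp [Function.comp]
      have h4 := hsum (l.map (h⁻¹ * ·))
      rw [h3] at h4
      exact h4.symm
  -- continuity
  have hDcont : Continuous (fun p : G × G => D p.1 p.2) := by
    rw [continuous_iff_continuousAt]
    rintro ⟨x₀, y₀⟩
    rw [ContinuousAt, Metric.tendsto_nhds]
    intro ε hε
    obtain ⟨k, hk⟩ := exists_pow_lt_of_lt_one (half_pos hε) (by norm_num : (2⁻¹:ℝ) < 1)
    have hWnbhd : ∀ z : G, ((fun x => z⁻¹ * x) ⁻¹' W (-(k:ℤ))) ∈ nhds z := by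
      intro z
      refine IsOpen.mem_nhds ((hWopen _).preimage (continuous_mul_left z⁻¹)) ?_
      simp [hWone]
    have hmem : (((fun x => x₀⁻¹ * x) ⁻¹' W (-(k:ℤ))) ×ˢ ((fun y => y₀⁻¹ * y) ⁻¹' W (-(k:ℤ)))) ∈
        nhds (x₀, y₀) := prod_mem_nhds (hWnbhd x₀) (hWnbhd y₀)
    refine Filter.eventually_of_mem hmem ?_
    rintro ⟨x, y⟩ ⟨hx, hy⟩
    simp only [Set.mem_preimage] at hx hy
    have hb : ∀ z w : G, z⁻¹ * w ∈ W (-(k:ℤ)) → D z w ≤ (2:ℝ)^(-(k:ℤ)) := by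
      intro z w hzw
      refine (hDle z w).trans ?_
      have : d₀ z w ≤ (2:ℝ≥0)^(-(k:ℤ)) := f_le hzw
      calc (d₀ z w : ℝ) ≤ (((2:ℝ≥0)^(-(k:ℤ)) : ℝ≥0) : ℝ) := NNReal.coe_le_coe.2 this
        _ = (2:ℝ)^(-(k:ℤ)) := by push_cast; ring_nf
    have hxx : D x₀ x ≤ (2:ℝ)^(-(k:ℤ)) := hb _ _ hx
    have hyy : D y₀ y ≤ (2:ℝ)^(-(k:ℤ)) := hb _ _ hy
    have hpow : (2:ℝ)^(-(k:ℤ)) < ε / 2 := by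
      rwa [zpow_neg, ← inv_zpow, zpow_natCast]
    have t1 : D x y ≤ D x x₀ + D x₀ y₀ + D y₀ y := by
      have := hDtri x x₀ y
      have := hDtri x₀ y₀ y
      linarith
    have t2 : D x₀ y₀ ≤ D x₀ x + D x y + D y y₀ := by
      have := hDtri x₀ x y₀
      have := hDtri x y y₀
      linarith
    have hc1 : D x x₀ = D x₀ x := hDcomm x x₀
    have hc2 : D y₀ y = D y y₀ := hDcomm y₀ y
    rw [Real.dist_eq, abs_sub_lt_iff]
    constructor <;> linarith
  refine ⟨D, ⟨hDself, hDnonneg, hDcomm, hDtri, hDinv, hDcont⟩, ?_, ?_⟩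
  · intro x y n hn
    have h1 : (d₀ x y : ℝ) ≤ (2:ℝ)^n := (hleD x y).trans hn
    have h2 : d₀ x y ≤ (2:ℝ≥0)^n := by
      rw [← NNReal.coe_le_coe] at *
      calc (d₀ x y : ℝ) ≤ (2:ℝ)^n := h1
        _ = (((2:ℝ≥0)^n : ℝ≥0) : ℝ) := by push_cast; norm_num
    exact mem_of_f_le h2
  · intro x y n hn
    refine (hDle x y).trans ?_
    have : d₀ x y ≤ (2:ℝ≥0)^n := f_le hn
    calc (d₀ x y : ℝ) ≤ (((2:ℝ≥0)^n : ℝ≥0) : ℝ) := NNReal.coe_le_coe.2 this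
      _ = (2:ℝ)^n := by push_cast; norm_num

theorem coarsely_bounded_exhaustion {G : Type*} [Group G] [TopologicalSpace G]
    [IsTopologicalGroup G] (A : Set G) (hA : CoarselyBounded A)
    (V : ℕ → Set G) (hopen : ∀ n, IsOpen (V n)) (hmono : Monotone V)
    (hcover : (⋃ n, V n) = Set.univ) (hsq : ∀ n, V n * V n ⊆ V (n + 1)) :
    ∃ n, A ⊆ V n := by
  classical
  have hcov' : ∀ g : G, ∃ n : ℕ, g ∈ V n := by
    intro g
    have : g ∈ ⋃ n, V n := hcover ▸ Set.mem_univ g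
    exact Set.mem_iUnion.1 this
  obtain ⟨n₀, hn₀⟩ := hcov' 1
  -- symmetrized chain
  set U : ℕ → Set G := fun n => V (n + n₀) ∩ (V (n + n₀))⁻¹ with hU
  have hUopen : ∀ n, IsOpen (U n) := fun n => ((hopen _).inter (hopen _).inv)
  have hUone : ∀ n, (1:G) ∈ U n := by
    intro n
    have h1 : (1:G) ∈ V (n + n₀) := hmono (Nat.le_add_left n₀ n) hn₀
    exact ⟨h1, by simpa using h1⟩
  have hUsymm : ∀ n, ∀ g ∈ U n, g⁻¹ ∈ U n := by
    rintro n g ⟨h1, h2⟩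
    exact ⟨h2, by simpa using h1⟩
  have hUsq : ∀ n, U n * U n ⊆ U (n + 1) := by
    intro n z hz
    rw [Set.mem_mul] at hz
    obtain ⟨a, ⟨ha1, ha2⟩, b, ⟨hb1, hb2⟩, rfl⟩ := hz
    have hidx : n + n₀ + 1 = n + 1 + n₀ := by omega
    constructor
    · have : a * b ∈ V (n + n₀) * V (n + n₀) := Set.mul_mem_mul ha1 hb1
      have := hsq _ this
      rwa [hidx] at this
    · rw [Set.mem_inv, mul_inv_rev]
      have : b⁻¹ * a⁻¹ ∈ V (n + n₀) * V (n + n₀) :=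
        Set.mul_mem_mul (Set.mem_inv.1 hb2) (Set.mem_inv.1 ha2)
      have := hsq _ this
      rwa [hidx] at this
  have hUmono : Monotone U := monotone_nat_of_le_succ fun n x hx => by
    have : (1:G) * x ∈ U n * U n := Set.mul_mem_mul (hUone n) hx
    simpa using hUsq n this
  have hUcov : ∀ g : G, ∃ n : ℕ, g ∈ U n := by
    intro g
    obtain ⟨a, ha⟩ := hcov' g
    obtain ⟨b, hb⟩ := hcov' g⁻¹
    refine ⟨max a b, hmono (by omega) ha, ?_⟩
    rw [Set.mem_inv]
    exact hmono (by omega) hb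
  -- small symmetric neighborhoods of 1
  have step : ∀ s : Set G, IsOpen s → (1:G) ∈ s →
      ∃ t : Set G, IsOpen t ∧ (1:G) ∈ t ∧ (∀ g ∈ t, g⁻¹ ∈ t) ∧ t * t * t ⊆ s := by
    intro s hs h1
    obtain ⟨P, hPopen, hP1, hPP⟩ := exists_open_nhds_one_mul_subset (hs.mem_nhds h1)
    obtain ⟨Q, hQopen, hQ1, hQQ⟩ := exists_open_nhds_one_mul_subset (hPopen.mem_nhds hP1)
    refine ⟨(Q ∩ P) ∩ ((Q ∩ P))⁻¹, ((hQopen.inter hPopen).inter (hQopen.inter hPopen).inv),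
      ⟨⟨hQ1, hP1⟩, by simpa using And.intro hQ1 hP1⟩, ?_, ?_⟩
    · rintro g ⟨h1', h2'⟩
      exact ⟨h2', by simpa using h1'⟩
    · intro z hz
      rw [Set.mem_mul] at hz
      obtain ⟨ab, hab, c, hc, rfl⟩ := hz
      rw [Set.mem_mul] at hab
      obtain ⟨a, ha, b, hb, rfl⟩ := hab
      have h1' : a * b ∈ P := hQQ (Set.mul_mem_mul ha.1.1 hb.1.1)
      exact hPP (Set.mul_mem_mul h1' hc.1.2)
  let ST := {s : Set G // IsOpen s ∧ (1:G) ∈ s ∧ (∀ g ∈ s, g⁻¹ ∈ s)}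
  have stepST : ∀ s : ST, ∃ t : ST, t.1 * t.1 * t.1 ⊆ s.1 := by
    rintro ⟨s, hs1, hs2, hs3⟩
    obtain ⟨t, ht1, ht2, ht3, ht4⟩ := step s hs1 hs2
    exact ⟨⟨t, ht1, ht2, ht3⟩, ht4⟩
  choose Fstep hFstep using stepST
  set N : ℕ → ST := fun k => Fstep^[k] ⟨U 0, hUopen 0, hUone 0, hUsymm 0⟩ with hN
  have hN0 : (N 0).1 = U 0 := rfl
  have hNsucc : ∀ k, N (k + 1) = Fstep (N k) := fun k => Function.iterate_succ_apply' _ _ _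
  have hNtriple : ∀ k, (N (k+1)).1 * (N (k+1)).1 * (N (k+1)).1 ⊆ (N k).1 := fun k => by
    rw [hNsucc k]; exact hFstep (N k)
  -- the two-sided chain
  set W : ℤ → Set G := fun n => if 0 ≤ n then U (2 * n.toNat) else (N (-n).toNat).1 with hW
  have hWnonneg : ∀ n : ℤ, 0 ≤ n → W n = U (2 * n.toNat) := by
    intro n hn; simp [hW, hn]
  have hWneg : ∀ n : ℤ, n < 0 → W n = (N (-n).toNat).1 := by
    intro n hn; simp [hW, not_le.2 hn]
  have hWopen : ∀ n, IsOpen (W n) := by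
    intro n
    rcases le_or_gt 0 n with h | h
    · rw [hWnonneg n h]; exact hUopen _
    · rw [hWneg n h]; exact (N _).2.1
  have hWone : ∀ n, (1:G) ∈ W n := by
    intro n
    rcases le_or_gt 0 n with h | h
    · rw [hWnonneg n h]; exact hUone _
    · rw [hWneg n h]; exact (N _).2.2.1
  have hWsymm : ∀ n, ∀ g ∈ W n, g⁻¹ ∈ W n := by
    intro n
    rcases le_or_gt 0 n with h | h
    · rw [hWnonneg n h]; exact hUsymm _
    · rw [hWneg n h]; exact (N _).2.2.2
  have hWtriple : ∀ n : ℤ, W n * W n * W n ⊆ W (n + 1) := by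
    intro n
    rcases le_or_gt 0 n with h | h
    · rw [hWnonneg n h, hWnonneg (n+1) (by omega)]
      have ht : (n + 1).toNat = n.toNat + 1 := by omega
      rw [ht]
      intro z hz
      rw [Set.mem_mul] at hz
      obtain ⟨ab, hab, c, hc, rfl⟩ := hz
      rw [Set.mem_mul] at hab
      obtain ⟨a, ha, b, hb, rfl⟩ := hab
      have h1 : a * b ∈ U (2 * n.toNat + 1) := hUsq _ (Set.mul_mem_mul ha hb)
      have h2 : (a * b) * c ∈ U (2 * n.toNat + 1 + 1) :=
        hUsq _ (Set.mul_mem_mul h1 (hUmono (by omega) hc))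
      have : 2 * n.toNat + 1 + 1 = 2 * (n.toNat + 1) := by omega
      rwa [this] at h2
    · rw [hWneg n h]
      have hk : (-n).toNat = ((-n).toNat - 1) + 1 := by omega
      have hW1 : W (n + 1) = (N ((-n).toNat - 1)).1 := by
        rcases eq_or_lt_of_le (by omega : n + 1 ≤ 0) with h' | h'
        · rw [hWnonneg (n+1) (le_of_eq h'.symm)]
          have h1 : (n+1).toNat = 0 := by omega
          have h2 : (-n).toNat - 1 = 0 := by omega
          rw [h1, h2, hN0]
        · rw [hWneg (n+1) h']
          congr 2
          omega
      rw [hW1]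
      calc (N (-n).toNat).1 * (N (-n).toNat).1 * (N (-n).toNat).1
          = (N (((-n).toNat - 1) + 1)).1 * (N (((-n).toNat - 1) + 1)).1 *
            (N (((-n).toNat - 1) + 1)).1 := by rw [← hk]
        _ ⊆ (N ((-n).toNat - 1)).1 := hNtriple _
  have hWcov : ∀ g : G, ∃ n : ℤ, g ∈ W n := by
    intro g
    obtain ⟨k, hk⟩ := hUcov g
    refine ⟨(k : ℤ), ?_⟩
    rw [hWnonneg _ (by positivity), Int.toNat_natCast]
    exact hUmono (by omega) hk
  obtain ⟨d, hd, hkey, -⟩ := chain_pseudometric W hWopen hWone hWsymm hWtriple hWcov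
  obtain ⟨C, hC⟩ := hA d hd
  rcases A.eq_empty_or_nonempty with hAe | ⟨x₀, hx₀⟩
  · exact ⟨0, by simp [hAe]⟩
  obtain ⟨n, hn⟩ := pow_unbounded_of_one_lt (2 * C) (one_lt_two (α := ℝ))
  obtain ⟨a, ha⟩ := hcov' x₀
  refine ⟨max a (2 * n + n₀) + 1, ?_⟩
  intro y hy
  have hdb : 2 * d x₀ y ≤ (2:ℝ)^(n:ℤ) := by
    have h1 : d x₀ y ≤ C := hC x₀ hx₀ y hy
    have h2 : (2:ℝ)^(n:ℤ) = 2^n := zpow_natCast 2 n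
    rw [h2]
    linarith
  have hmem : x₀⁻¹ * y ∈ W (n : ℤ) := hkey x₀ y n hdb
  rw [hWnonneg _ (by positivity), Int.toNat_natCast] at hmem
  have hmem2 : x₀⁻¹ * y ∈ V (2 * n + n₀) := hmem.1
  have hprod : x₀ * (x₀⁻¹ * y) ∈ V (max a (2 * n + n₀)) * V (max a (2 * n + n₀)) :=
    Set.mul_mem_mul (hmono (le_max_left _ _) ha) (hmono (le_max_right _ _) hmem2)
  have := hsq _ hprod
  simpa using this
end
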